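/- Let E be an evolutionary system and define its closure Ē by Ē([τ,∞)) := the closure of E([τ,∞)) in C([τ,∞); X_w) for every τ ∈ ℝ, with Ē((−∞,∞)) given by condition (4) of the definition of evolutionary system. Then Ē is itself an evolutionary system. -/
import Mathlib


structure EvolutionarySystem (X : Type*) where
  E : ℝ → Set (ℝ → X)
  Ec : Set (ℝ → X)
  nonempty : (E 0).Nonempty
  shift : ∀ (s T : ℝ), E (T + s) = {u | (fun t => u (t + s)) ∈ E T}
  restrict : ∀ (T₁ T₂ : ℝ), T₁ ≤ T₂ → E T₁ ⊆ E T₂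
  complete : Ec = {u | ∀ T, u ∈ E T}

/-- `closE dw es τ` is the closure of `E([τ,∞))` in `C([τ,∞); X_w)`, i.e. the set of limits of
sequences of trajectories converging uniformly (in the weak metric `dw`) on compact subsets
of `[τ,∞)`. -/
def closE {X : Type*} (dw : X → X → ℝ) (es : EvolutionarySystem X) (τ : ℝ) :
    Set (ℝ → X) :=
  {u | ∃ un : ℕ → ℝ → X, (∀ n, un n ∈ es.E τ) ∧
    ∀ b, τ ≤ b → ∀ ε > 0, ∃ N, ∀ n ≥ N, ∀ t ∈ Set.Icc τ b, dw (un n t) (u t) < ε}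

/-- the closure `Ē` of an evolutionary system `E` (with complete trajectories
given by condition (4)) is itself an evolutionary system.  Here `dw` is a metric on `X` for
which `X` is (sequentially) compact. -/
theorem stmt3 {X : Type*} (dw : X → X → ℝ)
    (hsymm : ∀ x y, dw x y = dw y x)
    (htri : ∀ x y z, dw x z ≤ dw x y + dw y z)
    (hzero : ∀ x y, dw x y = 0 ↔ x = y)
    (hcomp : ∀ xn : ℕ → X, ∃ (φ : ℕ → ℕ) (x : X), StrictMono φ ∧
      Filter.Tendsto (fun k => dw (xn (φ k)) x) Filter.atTop (nhds 0))
    (es : EvolutionarySystem X) :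
    ∃ esbar : EvolutionarySystem X,
      (∀ τ, esbar.E τ = closE dw es τ) ∧
      esbar.Ec = {u | ∀ τ, u ∈ closE dw es τ} := by
  refine ⟨⟨closE dw es, {u | ∀ τ, u ∈ closE dw es τ}, ?_, ?_, ?_, rfl⟩, fun _ => rfl, rfl⟩
  · obtain ⟨u, hu⟩ := es.nonempty
    exact ⟨u, fun _ => u, fun _ => hu, fun b hb ε hε =>
      ⟨0, fun n _ t _ => by simpa [(hzero (u t) (u t)).mpr rfl] using hε⟩⟩
  · intro s T
    ext u
    constructor
    · rintro ⟨un, hun, hconv⟩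
      refine ⟨fun n t => un n (t + s), fun n => by have := hun n; rw [es.shift s T] at this; exact this, ?_⟩
      intro b hb ε hε
      obtain ⟨N, hN⟩ := hconv (b + s) (by linarith) ε hε
      exact ⟨N, fun n hn t ht => hN n hn (t + s)
        ⟨by linarith [ht.1], by linarith [ht.2]⟩⟩
    · rintro ⟨vn, hvn, hconv⟩
      refine ⟨fun n t => vn n (t - s), ?_, ?_⟩
      · intro n
        rw [es.shift s T]
        simpa using hvn n
      · intro b hb ε hε
        obtain ⟨N, hN⟩ := hconv (b - s) (by linarith) ε hε
        refine ⟨N, fun n hn t ht => ?_⟩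
        have := hN n hn (t - s) ⟨by linarith [ht.1], by linarith [ht.2]⟩
        simpa using this
  · rintro T₁ T₂ h u ⟨un, hun, hconv⟩
    exact ⟨un, fun n => es.restrict T₁ T₂ h (hun n), fun b hb ε hε => by
      obtain ⟨N, hN⟩ := hconv b (le_trans h hb) ε hε
      exact ⟨N, fun n hn t ht => hN n hn t ⟨le_trans h ht.1, ht.2⟩⟩⟩
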